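/- arXiv:cs/0703120 — 5 statements merged into one kernel-verified Lean document; each statement's English description precedes it below -/
import Mathlib

section
/- With E_si(γ) = log₂ Σ_v Q(v) (Σ_u Q(u|v)^{1/(1+γ)})^{1+γ}, F_si(γ) = log₂ Σ_v Q(v) (Σ_u Q(u|v)^{1/(1+γ)})^γ, and G_si(γ) = log₂ Σ_v Q(v) (Σ_u Q(u|v)^{1/(1+γ)}), for every γ ∈ [0,1] we have E_si(γ) ≥ F_si(γ) + G_si(γ). -/
/-!
With weights `m v = Q(v)` and `S v = Σ_u Q(u|v)^{1/(1+γ)}`, the three quantities are `log₂` of the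
`m`-averages of `S^γ · S`, of `S^γ` and of `S`. As `S^γ` and `S` are both increasing in `S`,
Chebyshev's sum inequality gives `E[S^γ] · E[S] ≤ E[S^γ · S]`.
-/

open Finset

theorem MonovaryOn.weighted_sum_mul_sum_le_sum_mul_sum {ι α : Type*} [CommRing α] [LinearOrder α]
    [IsStrictOrderedRing α] {s : Finset ι} {w f g : ι → α} (hfg : MonovaryOn f g s)
    (hw : ∀ i ∈ s, 0 ≤ w i) :
    (∑ i ∈ s, w i * f i) * (∑ i ∈ s, w i * g i) ≤ (∑ i ∈ s, w i) * ∑ i ∈ s, w i * (f i * g i) := by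
  have gap : ∑ i ∈ s, ∑ j ∈ s, w i * w j * ((f i - f j) * (g i - g j)) =
      2 * ((∑ i ∈ s, w i) * ∑ i ∈ s, w i * (f i * g i)
        - (∑ i ∈ s, w i * f i) * (∑ i ∈ s, w i * g i)) := by
    have expand : ∀ i j, w i * w j * ((f i - f j) * (g i - g j)) =
        w i * (f i * g i) * w j - w i * f i * (w j * g j) - w i * g i * (w j * f j)
          + w i * (w j * (f j * g j)) := fun i j => by ring
    simp only [expand, sum_add_distrib, sum_sub_distrib, ← mul_sum, ← sum_mul]
    ring
  have : 0 ≤ ∑ i ∈ s, ∑ j ∈ s, w i * w j * ((f i - f j) * (g i - g j)) :=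
    sum_nonneg fun i hi => sum_nonneg fun j hj =>
      mul_nonneg (mul_nonneg (hw i hi) (hw j hj)) (hfg.sub_mul_sub_nonneg hj hi)
  linarith

theorem sum_mul_rpow_mul_sum_mul_le {ι : Type*} (s : Finset ι) {w S : ι → ℝ}
    (hw : ∀ i ∈ s, 0 ≤ w i) (hw1 : ∑ i ∈ s, w i = 1) (hS : ∀ i ∈ s, 0 ≤ S i) {γ : ℝ}
    (hγ : 0 ≤ γ) :
    (∑ i ∈ s, w i * S i ^ γ) * (∑ i ∈ s, w i * S i) ≤ ∑ i ∈ s, w i * S i ^ (1 + γ) := by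
  have hmono : MonovaryOn (fun i => S i ^ γ) S s := fun i hi j _ hij =>
    Real.rpow_le_rpow (hS i hi) hij.le hγ
  calc (∑ i ∈ s, w i * S i ^ γ) * (∑ i ∈ s, w i * S i)
      ≤ (∑ i ∈ s, w i) * ∑ i ∈ s, w i * (S i ^ γ * S i) :=
        hmono.weighted_sum_mul_sum_le_sum_mul_sum hw
    _ = ∑ i ∈ s, w i * S i ^ (1 + γ) := by
        rw [hw1, one_mul]
        refine sum_congr rfl fun i hi => ?_
        rw [Real.rpow_one_add' (hS i hi) (by linarith), mul_comm (S i)]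

theorem Real.sum_rpow_pos_of_sum_pos {ι : Type*} {s : Finset ι} {x : ι → ℝ}
    (hx : ∀ i ∈ s, 0 ≤ x i) (hpos : 0 < ∑ i ∈ s, x i) (p : ℝ) : 0 < ∑ i ∈ s, x i ^ p := by
  obtain ⟨i, hi, hxi⟩ := exists_lt_of_sum_lt (s := s) (f := 0) (g := x) (by simpa using hpos)
  exact sum_pos' (fun j hj => Real.rpow_nonneg (hx j hj) p) ⟨i, hi, Real.rpow_pos_of_pos hxi p⟩

theorem stmt1_general {U V : Type} [Fintype U] [Fintype V] [Nonempty V]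
    (Q : U → V → ℝ) (hQ0 : ∀ u v, 0 ≤ Q u v)
    (hQ1 : ∑ u, ∑ v, Q u v = 1)
    (hm : ∀ v, 0 < ∑ u, Q u v)
    (γ : ℝ) (hγ0 : 0 ≤ γ) :
    Real.logb 2 (∑ v, (∑ u, Q u v) *
        ((∑ u, (Q u v / (∑ u', Q u' v)) ^ ((1:ℝ)/(1+γ))) ^ (1+γ))) ≥
      Real.logb 2 (∑ v, (∑ u, Q u v) *
        ((∑ u, (Q u v / (∑ u', Q u' v)) ^ ((1:ℝ)/(1+γ))) ^ γ)) +
      Real.logb 2 (∑ v, (∑ u, Q u v) *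
        (∑ u, (Q u v / (∑ u', Q u' v)) ^ ((1:ℝ)/(1+γ)))) := by
  set m : V → ℝ := fun v => ∑ u, Q u v
  set S : V → ℝ := fun v => ∑ u, (Q u v / m v) ^ ((1:ℝ)/(1+γ))
  have hm1 : ∑ v, m v = 1 := by rw [← hQ1]; exact sum_comm
  have hS : ∀ v, 0 < S v := fun v =>
    Real.sum_rpow_pos_of_sum_pos (fun u _ => div_nonneg (hQ0 u v) (hm v).le)
      (by rw [← sum_div, div_self (hm v).ne']; exact one_pos) _
  have hF : 0 < ∑ v, m v * S v ^ γ :=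
    sum_pos (fun v _ => mul_pos (hm v) (Real.rpow_pos_of_pos (hS v) γ)) univ_nonempty
  have hG : 0 < ∑ v, m v * S v := sum_pos (fun v _ => mul_pos (hm v) (hS v)) univ_nonempty
  rw [ge_iff_le, ← Real.logb_mul hF.ne' hG.ne']
  exact Real.logb_le_logb_of_le one_lt_two (mul_pos hF hG)
    (sum_mul_rpow_mul_sum_mul_le univ (fun v _ => (hm v).le) hm1 (fun v _ => (hS v).le) hγ0)

/-- `E_si(γ) ≥ F_si(γ) + G_si(γ)` for `γ ∈ [0,1]`. -/
theorem stmt1 {U V : Type} [Fintype U] [Fintype V] [Nonempty U] [Nonempty V]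
    (Q : U → V → ℝ) (hQ0 : ∀ u v, 0 ≤ Q u v)
    (hQ1 : ∑ u, ∑ v, Q u v = 1)
    (hm : ∀ v, 0 < ∑ u, Q u v)
    (γ : ℝ) (hγ0 : 0 ≤ γ) (hγ1 : γ ≤ 1) :
    Real.logb 2 (∑ v, (∑ u, Q u v) *
        ((∑ u, (Q u v / (∑ u', Q u' v)) ^ ((1:ℝ)/(1+γ))) ^ (1+γ))) ≥
      Real.logb 2 (∑ v, (∑ u, Q u v) *
        ((∑ u, (Q u v / (∑ u', Q u' v)) ^ ((1:ℝ)/(1+γ))) ^ γ)) +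
      Real.logb 2 (∑ v, (∑ u, Q u v) *
        (∑ u, (Q u v / (∑ u', Q u' v)) ^ ((1:ℝ)/(1+γ)))) :=
  stmt1_general Q hQ0 hQ1 hm γ hγ0
end

section
/- Let W : 𝒳 → 𝒴 → ℝ≥0 be a channel (each W(·|x) a pmf on 𝒴), β a pmf on 𝒳, and P(y) = Σ_x β(x) W(y|x), assumed positive for all y. For γ ∈ [0,1], define J(y) = Σ_x β(x) (W(y|x)/P(y))^{1/(1+γ)}, and set E₀(γ) = −log₂ Σ_y P(y) J(y)^{1+γ}, F(γ) = −log₂ Σ_y P(y) J(y)^γ, G(γ) = −log₂ Σ_y P(y) J(y). Then E₀(γ) ≤ F(γ) + G(γ). -/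
/-!
Write `E[·]` for expectation under the output distribution `P`. The three quantities are
`-log₂ E[J^(1+γ)]`, `-log₂ E[J^γ]` and `-log₂ E[J]`, so the claim is `E[J^γ] E[J] ≤ E[J^(1+γ)]`.
This is Chebyshev's sum inequality: for `γ ≥ 0` the functions `J^γ` and `J` are similarly
ordered, hence positively correlated under any probability weights.
-/

open Finset

theorem MonovaryOn.sum_mul_sum_le_sum_mul_sum_mul {ι : Type*} {s : Finset ι} {w f g : ι → ℝ}
    (hw : ∀ i ∈ s, 0 ≤ w i) (hfg : MonovaryOn f g s) :
    (∑ i ∈ s, w i * f i) * ∑ i ∈ s, w i * g i ≤ (∑ i ∈ s, w i) * ∑ i ∈ s, w i * (f i * g i) := by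
  suffices 2 * ((∑ i ∈ s, w i * f i) * ∑ i ∈ s, w i * g i) ≤
      2 * ((∑ i ∈ s, w i) * ∑ i ∈ s, w i * (f i * g i)) by linarith
  calc 2 * ((∑ i ∈ s, w i * f i) * ∑ i ∈ s, w i * g i)
      = ∑ i ∈ s, ∑ j ∈ s, w i * w j * (f i * g j + f j * g i) := by
        rw [two_mul]; nth_rewrite 2 [mul_comm]
        simp only [sum_mul_sum, ← sum_add_distrib]
        exact sum_congr rfl fun i _ => sum_congr rfl fun j _ => by ring
    _ ≤ ∑ i ∈ s, ∑ j ∈ s, w i * w j * (f i * g i + f j * g j) :=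
        sum_le_sum fun i hi => sum_le_sum fun j hj => mul_le_mul_of_nonneg_left
          (hfg.mul_add_mul_le_mul_add_mul hi hj) (mul_nonneg (hw i hi) (hw j hj))
    _ = 2 * ((∑ i ∈ s, w i) * ∑ i ∈ s, w i * (f i * g i)) := by
        rw [two_mul]; nth_rewrite 2 [mul_comm]
        simp only [sum_mul_sum, ← sum_add_distrib]
        exact sum_congr rfl fun i _ => sum_congr rfl fun j _ => by ring

theorem Real.sum_mul_rpow_mul_sum_mul_le_sum_mul_rpow_one_add {ι : Type*} {s : Finset ι}
    {w f : ι → ℝ} (hw : ∀ i ∈ s, 0 ≤ w i) (hw1 : ∑ i ∈ s, w i = 1) (hf : ∀ i ∈ s, 0 ≤ f i)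
    {γ : ℝ} (hγ : 0 ≤ γ) :
    (∑ i ∈ s, w i * f i ^ γ) * ∑ i ∈ s, w i * f i ≤ ∑ i ∈ s, w i * f i ^ (1 + γ) := by
  have hmono : MonovaryOn (fun i => f i ^ γ) f s := fun i hi j hj hij =>
    Real.rpow_le_rpow (hf i hi) hij.le hγ
  calc (∑ i ∈ s, w i * f i ^ γ) * ∑ i ∈ s, w i * f i
      ≤ (∑ i ∈ s, w i) * ∑ i ∈ s, w i * (f i ^ γ * f i) :=
        hmono.sum_mul_sum_le_sum_mul_sum_mul hw
    _ = ∑ i ∈ s, w i * f i ^ (1 + γ) := by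
        rw [hw1, one_mul]
        refine sum_congr rfl fun i hi => ?_
        rw [add_comm, Real.rpow_add_one' (hf i hi) (by linarith)]

theorem stmt2_general {X Y : Type} [Fintype X] [Fintype Y] [Nonempty Y]
    (W : X → Y → ℝ) (hW0 : ∀ x y, 0 ≤ W x y) (hW1 : ∀ x, ∑ y, W x y = 1)
    (β : X → ℝ) (hβ0 : ∀ x, 0 ≤ β x) (hβ1 : ∑ x, β x = 1)
    (hP : ∀ y, 0 < ∑ x, β x * W x y)
    (γ : ℝ) (hγ0 : 0 ≤ γ) :
    -Real.logb 2 (∑ y, (∑ x, β x * W x y) *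
        ((∑ x, β x * (W x y / (∑ x', β x' * W x' y)) ^ ((1:ℝ)/(1+γ))) ^ (1+γ))) ≤
      (-Real.logb 2 (∑ y, (∑ x, β x * W x y) *
        ((∑ x, β x * (W x y / (∑ x', β x' * W x' y)) ^ ((1:ℝ)/(1+γ))) ^ γ))) +
      (-Real.logb 2 (∑ y, (∑ x, β x * W x y) *
        (∑ x, β x * (W x y / (∑ x', β x' * W x' y)) ^ ((1:ℝ)/(1+γ))))) := by
  set P : Y → ℝ := fun y => ∑ x, β x * W x y
  set J : Y → ℝ := fun y => ∑ x, β x * (W x y / P y) ^ ((1:ℝ)/(1+γ))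
  have hPsum : ∑ y, P y = 1 := by
    simp only [P]
    rw [sum_comm]
    simp only [← mul_sum, hW1, mul_one, hβ1]
  have hJpos (y : Y) : 0 < J y := by
    obtain ⟨x, -, hx⟩ :=
      exists_lt_of_sum_lt (s := univ) (f := fun _ => (0 : ℝ)) (by simpa using hP y)
    obtain ⟨hβx, hWx⟩ := (pos_and_pos_or_neg_and_neg_of_mul_pos hx).resolve_right
      fun h => h.1.not_ge (hβ0 x)
    exact sum_pos'
      (fun x _ => mul_nonneg (hβ0 x) (Real.rpow_nonneg (div_nonneg (hW0 x y) (hP y).le) _))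
      ⟨x, mem_univ x, mul_pos hβx (Real.rpow_pos_of_pos (div_pos hWx (hP y)) _)⟩
  have hB : 0 < ∑ y, P y * J y ^ γ :=
    sum_pos (fun y _ => mul_pos (hP y) (Real.rpow_pos_of_pos (hJpos y) γ)) univ_nonempty
  have hC : 0 < ∑ y, P y * J y := sum_pos (fun y _ => mul_pos (hP y) (hJpos y)) univ_nonempty
  rw [← neg_add, neg_le_neg_iff, ← Real.logb_mul hB.ne' hC.ne']
  exact Real.logb_le_logb_of_le one_lt_two (mul_pos hB hC)
    (Real.sum_mul_rpow_mul_sum_mul_le_sum_mul_rpow_one_add (fun y _ => (hP y).le) hPsum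
      (fun y _ => (hJpos y).le) hγ0)

/-- For a channel `W`, input pmf `β`, output marginal `P(y) = ∑ x, β x * W x y > 0`,
and `γ ∈ [0,1]`, with `J(y) = ∑ x, β x * (W x y / P y)^(1/(1+γ))`:
`E₀(γ) ≤ F(γ) + G(γ)`. -/
theorem stmt2 {X Y : Type} [Fintype X] [Fintype Y] [Nonempty X] [Nonempty Y]
    (W : X → Y → ℝ) (hW0 : ∀ x y, 0 ≤ W x y) (hW1 : ∀ x, ∑ y, W x y = 1)
    (β : X → ℝ) (hβ0 : ∀ x, 0 ≤ β x) (hβ1 : ∑ x, β x = 1)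
    (hP : ∀ y, 0 < ∑ x, β x * W x y)
    (γ : ℝ) (hγ0 : 0 ≤ γ) (hγ1 : γ ≤ 1) :
    -Real.logb 2 (∑ y, (∑ x, β x * W x y) *
        ((∑ x, β x * (W x y / (∑ x', β x' * W x' y)) ^ ((1:ℝ)/(1+γ))) ^ (1+γ))) ≤
      (-Real.logb 2 (∑ y, (∑ x, β x * W x y) *
        ((∑ x, β x * (W x y / (∑ x', β x' * W x' y)) ^ ((1:ℝ)/(1+γ))) ^ γ))) +
      (-Real.logb 2 (∑ y, (∑ x, β x * W x y) *
        (∑ x, β x * (W x y / (∑ x', β x' * W x' y)) ^ ((1:ℝ)/(1+γ))))) :=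
  stmt2_general W hW0 hW1 β hβ0 hβ1 hP γ hγ0
end

section
/- If γ ∈ (0,1] and γR > E_si(γ), then the open interval ((1+γ)/γ · G_si(γ), (1+γ)/γ · (γR − F_si(γ))) of bias values is nonempty; i.e., G_si(γ) < γR − F_si(γ). -/
/-!
With `p v` the marginal of `v` and `S v = ∑ u, Q(u|v)^{1/(1+γ)}`, the three exponents are
`E = log₂ 𝔼[S^{1+γ}]`, `F = log₂ 𝔼[S^γ]` and `G = log₂ 𝔼[S]` under `p`. Since `S ↦ S^γ` is
monotone, Chebyshev's sum inequality gives `𝔼[S^γ] 𝔼[S] ≤ 𝔼[S^{1+γ}]`, i.e. `F + G ≤ E < γR`.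
-/

open Finset

theorem Monovary.sum_mul_mul_sum_mul_le {ι : Type*} [Fintype ι] {w f g : ι → ℝ}
    (hw : ∀ i, 0 ≤ w i) (hfg : Monovary f g) :
    (∑ i, w i * f i) * (∑ i, w i * g i) ≤ (∑ i, w i) * ∑ i, w i * (f i * g i) := by
  have hdouble : ∑ i, ∑ j, w i * w j * ((f i - f j) * (g i - g j)) =
      2 * ((∑ i, w i) * (∑ i, w i * (f i * g i)) - (∑ i, w i * f i) * (∑ i, w i * g i)) := by
    have hexpand : ∀ i j, w i * w j * ((f i - f j) * (g i - g j)) =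
        w i * (f i * g i) * w j - w i * f i * (w j * g j)
          - w i * g i * (w j * f j) + w i * (w j * (f j * g j)) := fun i j => by ring
    simp only [hexpand, sum_add_distrib, sum_sub_distrib, ← sum_mul, ← mul_sum]
    ring
  have hnonneg : 0 ≤ ∑ i, ∑ j, w i * w j * ((f i - f j) * (g i - g j)) :=
    sum_nonneg fun i _ => sum_nonneg fun j _ =>
      mul_nonneg (mul_nonneg (hw i) (hw j)) (hfg.sub_mul_sub_nonneg j i)
  linarith

theorem sum_mul_rpow_mul_sum_mul_le_s3 {ι : Type*} [Fintype ι] {p s : ι → ℝ} {γ : ℝ}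
    (hp : ∀ i, 0 ≤ p i) (hp1 : ∑ i, p i = 1) (hs : ∀ i, 0 ≤ s i) (hγ : 0 ≤ γ) :
    (∑ i, p i * s i ^ γ) * (∑ i, p i * s i) ≤ ∑ i, p i * s i ^ (1 + γ) := by
  have hmono : Monovary (fun i => s i ^ γ) s := fun i j hij =>
    Real.rpow_le_rpow (hs i) hij.le hγ
  calc (∑ i, p i * s i ^ γ) * (∑ i, p i * s i)
      ≤ (∑ i, p i) * ∑ i, p i * (s i ^ γ * s i) := hmono.sum_mul_mul_sum_mul_le hp
    _ = ∑ i, p i * s i ^ (1 + γ) := by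
      rw [hp1, one_mul]
      refine sum_congr rfl fun i _ => ?_
      rw [Real.rpow_add' (hs i) (by linarith), Real.rpow_one, mul_comm (s i)]

theorem sum_mul_pos_of_sum_pos {ι : Type*} [Fintype ι] {p s : ι → ℝ}
    (hp : ∀ i, 0 ≤ p i) (hpos : 0 < ∑ i, p i) (hs : ∀ i, 0 < s i) :
    0 < ∑ i, p i * s i := by
  obtain ⟨i, -, hi⟩ := (sum_pos_iff_of_nonneg fun i _ => hp i).1 hpos
  exact sum_pos' (fun j _ => mul_nonneg (hp j) (hs j).le) ⟨i, mem_univ i, mul_pos hi (hs i)⟩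

theorem sum_rpow_pos_of_sum_pos {ι : Type*} [Fintype ι] {f : ι → ℝ}
    (hf : ∀ i, 0 ≤ f i) (hpos : 0 < ∑ i, f i) (r : ℝ) :
    0 < ∑ i, f i ^ r := by
  obtain ⟨i, -, hi⟩ := (sum_pos_iff_of_nonneg fun i _ => hf i).1 hpos
  exact sum_pos' (fun j _ => Real.rpow_nonneg (hf j) r) ⟨i, mem_univ i, Real.rpow_pos_of_pos hi r⟩

theorem logb_sum_mul_rpow_add_logb_sum_mul_le {ι : Type*} [Fintype ι] {p s : ι → ℝ}
    {γ b : ℝ} (hb : 1 < b) (hp : ∀ i, 0 ≤ p i) (hp1 : ∑ i, p i = 1) (hs : ∀ i, 0 < s i)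
    (hγ : 0 ≤ γ) :
    Real.logb b (∑ i, p i * s i ^ γ) + Real.logb b (∑ i, p i * s i) ≤
      Real.logb b (∑ i, p i * s i ^ (1 + γ)) := by
  have hpos : 0 < ∑ i, p i := hp1 ▸ one_pos
  have hF := sum_mul_pos_of_sum_pos hp hpos fun i => Real.rpow_pos_of_pos (hs i) γ
  have hG := sum_mul_pos_of_sum_pos hp hpos hs
  rw [← Real.logb_mul hF.ne' hG.ne']
  exact Real.logb_le_logb_of_le hb (mul_pos hF hG)
    (sum_mul_rpow_mul_sum_mul_le_s3 hp hp1 (fun i => (hs i).le) hγ)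

theorem stmt3_general {U V : Type} [Fintype U] [Fintype V]
    (Q : U → V → ℝ) (hQ0 : ∀ u v, 0 ≤ Q u v)
    (hQ1 : ∑ u, ∑ v, Q u v = 1)
    (hm : ∀ v, 0 < ∑ u, Q u v)
    (γ : ℝ) (hγ0 : 0 < γ) (R : ℝ)
    (hrate : γ * R > Real.logb 2 (∑ v, (∑ u, Q u v) *
        ((∑ u, (Q u v / (∑ u', Q u' v)) ^ ((1:ℝ)/(1+γ))) ^ (1+γ)))) :
    (1+γ)/γ * Real.logb 2 (∑ v, (∑ u, Q u v) *
        (∑ u, (Q u v / (∑ u', Q u' v)) ^ ((1:ℝ)/(1+γ)))) <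
      (1+γ)/γ * (γ * R - Real.logb 2 (∑ v, (∑ u, Q u v) *
        ((∑ u, (Q u v / (∑ u', Q u' v)) ^ ((1:ℝ)/(1+γ))) ^ γ))) := by
  have hS : ∀ v, 0 < ∑ u, (Q u v / ∑ u', Q u' v) ^ ((1:ℝ)/(1+γ)) := fun v =>
    sum_rpow_pos_of_sum_pos (fun u => div_nonneg (hQ0 u v) (hm v).le)
      (by rw [← sum_div]; exact div_pos (hm v) (hm v)) _
  have hFGE := logb_sum_mul_rpow_add_logb_sum_mul_le one_lt_two (fun v => (hm v).le)
    (by rw [sum_comm]; exact hQ1) hS hγ0.le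
  exact mul_lt_mul_of_pos_left (by linarith) (by positivity)

/-- If `γ ∈ (0,1]` and `γ·R > E_si(γ)`, then the open interval of bias values
`((1+γ)/γ · G_si(γ), (1+γ)/γ · (γR − F_si(γ)))` is nonempty; i.e. `G_si(γ) < γR − F_si(γ)`. -/
theorem stmt3 {U V : Type} [Fintype U] [Fintype V] [Nonempty U] [Nonempty V]
    (Q : U → V → ℝ) (hQ0 : ∀ u v, 0 ≤ Q u v)
    (hQ1 : ∑ u, ∑ v, Q u v = 1)
    (hm : ∀ v, 0 < ∑ u, Q u v)
    (γ : ℝ) (hγ0 : 0 < γ) (hγ1 : γ ≤ 1) (R : ℝ) (hR : 0 < R)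
    (hrate : γ * R > Real.logb 2 (∑ v, (∑ u, Q u v) *
        ((∑ u, (Q u v / (∑ u', Q u' v)) ^ ((1:ℝ)/(1+γ))) ^ (1+γ)))) :
    (1+γ)/γ * Real.logb 2 (∑ v, (∑ u, Q u v) *
        (∑ u, (Q u v / (∑ u', Q u' v)) ^ ((1:ℝ)/(1+γ)))) <
      (1+γ)/γ * (γ * R - Real.logb 2 (∑ v, (∑ u, Q u v) *
        ((∑ u, (Q u v / (∑ u', Q u' v)) ^ ((1:ℝ)/(1+γ))) ^ γ))) :=
  stmt3_general Q hQ0 hQ1 hm γ hγ0 R hrate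
end

section
/- For the Slepian–Wolf random binning scheme with rate R and bias G satisfying G ≤ ((1+ρ)/ρ)[E_s(ρ) − F_s(ρ)] for some fixed ρ ∈ (0,1], the depth-d failure probability satisfies P(F_d) ≤ Σ_{k=1}^d 2^{−dρR + (d−k)(ρ/(1+ρ))G} · 2^{kE_s(ρ)} · 2^{(d−k)F_s(ρ)} ≤ d·2^{−d(ρR − E_s(ρ))}, for an IID source with pmf Q on finite 𝒰. -/
open Finset

/-- For the random binning scheme at rate `R` with bias
`G ≤ ((1+ρ)/ρ)[E_s(ρ) − F_s(ρ)]`, `ρ ∈ (0,1]`, the explicit depth-`d` failure bound satisfies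
`∑_{k=1}^d 2^(−dρR + (d−k)(ρ/(1+ρ))G + kE_s(ρ) + (d−k)F_s(ρ)) ≤ d·2^(−d(ρR − E_s(ρ)))`. -/
theorem stmt14 {U : Type} [Fintype U] [Nonempty U]
    (Q : U → ℝ) (hQ0 : ∀ u, 0 ≤ Q u) (hQ1 : ∑ u, Q u = 1)
    (ρ : ℝ) (hρ0 : 0 < ρ) (hρ1 : ρ ≤ 1) (R : ℝ) (hR : 0 < R) (G : ℝ)
    (Es Fs : ℝ)
    (hEs : Es = (1+ρ) * Real.logb 2 (∑ u, Q u ^ ((1:ℝ)/(1+ρ))))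
    (hFs : Fs = ρ * Real.logb 2 (∑ u, Q u ^ ((1:ℝ)/(1+ρ))))
    (hG : G ≤ (1+ρ)/ρ * (Es - Fs)) :
    ∀ d : ℕ, 1 ≤ d →
      ∑ k ∈ Finset.Icc 1 d,
          (2:ℝ) ^ (-(d:ℝ) * ρ * R + ((d:ℝ) - (k:ℝ)) * (ρ/(1+ρ)) * G
            + (k:ℝ) * Es + ((d:ℝ) - (k:ℝ)) * Fs)
        ≤ (d:ℝ) * (2:ℝ) ^ (-(d:ℝ) * (ρ * R - Es)) := by
  intro d hd
  have hρ1' : (0:ℝ) < 1 + ρ := by linarith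
  have hG' : (ρ/(1+ρ)) * G ≤ Es - Fs := by
    have := mul_le_mul_of_nonneg_left hG (le_of_lt (div_pos hρ0 hρ1'))
    calc (ρ/(1+ρ)) * G ≤ (ρ/(1+ρ)) * ((1+ρ)/ρ * (Es - Fs)) := this
      _ = Es - Fs := by field_simp
  have hbound : ∀ k ∈ Finset.Icc 1 d,
      (2:ℝ) ^ (-(d:ℝ) * ρ * R + ((d:ℝ) - (k:ℝ)) * (ρ/(1+ρ)) * G
        + (k:ℝ) * Es + ((d:ℝ) - (k:ℝ)) * Fs)
      ≤ (2:ℝ) ^ (-(d:ℝ) * (ρ * R - Es)) := by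
    intro k hk
    apply Real.rpow_le_rpow_of_exponent_le (by norm_num)
    have hk' : (k:ℝ) ≤ d := by
      exact_mod_cast (Finset.mem_Icc.mp hk).2
    nlinarith [mul_le_mul_of_nonneg_left hG' (by linarith : (0:ℝ) ≤ (d:ℝ) - (k:ℝ))]
  calc ∑ k ∈ Finset.Icc 1 d, (2:ℝ) ^ (-(d:ℝ) * ρ * R + ((d:ℝ) - (k:ℝ)) * (ρ/(1+ρ)) * G
            + (k:ℝ) * Es + ((d:ℝ) - (k:ℝ)) * Fs)
      ≤ ∑ k ∈ Finset.Icc 1 d, (2:ℝ) ^ (-(d:ℝ) * (ρ * R - Es)) :=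
        Finset.sum_le_sum hbound
    _ = (d:ℝ) * (2:ℝ) ^ (-(d:ℝ) * (ρ * R - Es)) := by
        rw [Finset.sum_const, Nat.card_Icc]; simp
end

section
/- For a joint pmf Q on finite 𝒰 × 𝒱 with positive 𝒱-marginals, the function E_si(ρ) is nonnegative, E_si(0) = 0, and E_si is monotone nondecreasing in ρ on [0,∞). -/
open Finset

private lemma add_rpow_le' {a b c : ℝ} (ha : 0 ≤ a) (hb : 0 ≤ b) (hc : 1 ≤ c) :
    a ^ c + b ^ c ≤ (a + b) ^ c := by
  lift a to NNReal using ha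
  lift b to NNReal using hb
  have := NNReal.add_rpow_le_rpow_add a b hc
  exact_mod_cast this

private lemma sum_rpow_le' {ι : Type*} (s : Finset ι) (x : ι → ℝ) (hx : ∀ i, 0 ≤ x i)
    {c : ℝ} (hc : 1 ≤ c) : ∑ i ∈ s, x i ^ c ≤ (∑ i ∈ s, x i) ^ c := by
  classical
  induction s using Finset.induction_on with
  | empty => simp [Real.zero_rpow (by linarith : c ≠ 0)]
  | insert a s hni ih =>
      rw [Finset.sum_insert hni, Finset.sum_insert hni]
      calc x a ^ c + ∑ i ∈ s, x i ^ c ≤ x a ^ c + (∑ i ∈ s, x i) ^ c := by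
            linarith [ih]
        _ ≤ (x a + ∑ i ∈ s, x i) ^ c :=
            add_rpow_le' (hx a) (Finset.sum_nonneg fun i _ => hx i) hc

private lemma norm_mono {ι : Type*} [Fintype ι] (x : ι → ℝ) (hx : ∀ i, 0 ≤ x i)
    {a b : ℝ} (ha : 1 ≤ a) (hab : a ≤ b) :
    (∑ i, x i ^ ((1:ℝ)/a)) ^ a ≤ (∑ i, x i ^ ((1:ℝ)/b)) ^ b := by
  have ha0 : (0:ℝ) < a := by linarith
  have hb0 : (0:ℝ) < b := by linarith
  have hc : (1:ℝ) ≤ b / a := (one_le_div ha0).mpr hab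
  have key : ∑ i, x i ^ ((1:ℝ)/a) ≤ (∑ i, x i ^ ((1:ℝ)/b)) ^ (b/a) := by
    have e : ∀ i : ι, x i ^ ((1:ℝ)/a) = (x i ^ ((1:ℝ)/b)) ^ (b/a) := by
      intro i
      rw [← Real.rpow_mul (hx i)]
      congr 1
      field_simp
    rw [Finset.sum_congr rfl fun i _ => e i]
    exact sum_rpow_le' _ _ (fun i => Real.rpow_nonneg (hx i) _) hc
  have h1 : (∑ i, x i ^ ((1:ℝ)/a)) ^ a ≤ ((∑ i, x i ^ ((1:ℝ)/b)) ^ (b/a)) ^ a :=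
    Real.rpow_le_rpow (Finset.sum_nonneg fun i _ => Real.rpow_nonneg (hx i) _) key ha0.le
  calc (∑ i, x i ^ ((1:ℝ)/a)) ^ a ≤ ((∑ i, x i ^ ((1:ℝ)/b)) ^ (b/a)) ^ a := h1
    _ = (∑ i, x i ^ ((1:ℝ)/b)) ^ b := by
        rw [← Real.rpow_mul (Finset.sum_nonneg fun i _ => Real.rpow_nonneg (hx i) _)]
        congr 1
        field_simp

/-- For a joint pmf `Q` on finite `U × V` with positive `V`-marginals, the
function `E_si` satisfies `E_si(0) = 0`, `E_si(ρ) ≥ 0` for all `ρ ≥ 0`, and `E_si` is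
monotone nondecreasing on `[0,∞)`. -/
theorem stmt17 {U V : Type} [Fintype U] [Fintype V] [Nonempty U] [Nonempty V]
    (Q : U → V → ℝ) (hQ0 : ∀ u v, 0 ≤ Q u v)
    (hQ1 : ∑ u, ∑ v, Q u v = 1)
    (hm : ∀ v, 0 < ∑ u, Q u v)
    (Esi : ℝ → ℝ)
    (hEsi : ∀ ρ : ℝ, Esi ρ = Real.logb 2 (∑ v, (∑ u, Q u v) *
        ((∑ u, (Q u v / (∑ u', Q u' v)) ^ ((1:ℝ)/(1+ρ))) ^ (1+ρ)))) :
    Esi 0 = 0 ∧ (∀ ρ : ℝ, 0 ≤ ρ → 0 ≤ Esi ρ) ∧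
      (∀ ρ₁ ρ₂ : ℝ, 0 ≤ ρ₁ → ρ₁ ≤ ρ₂ → Esi ρ₁ ≤ Esi ρ₂) := by
  set p : V → U → ℝ := fun v u => Q u v / (∑ u', Q u' v) with hp
  have hp0 : ∀ v u, 0 ≤ p v u := fun v u => div_nonneg (hQ0 u v) (hm v).le
  have hp1 : ∀ v, ∑ u, p v u = 1 := by
    intro v
    simp only [hp, ← Finset.sum_div]
    exact div_self (hm v).ne'
  have hple : ∀ v u, p v u ≤ 1 := by
    intro v u
    rw [← hp1 v]
    exact Finset.single_le_sum (fun i _ => hp0 v i) (Finset.mem_univ u)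
  have hmsum : ∑ v, ∑ u, Q u v = 1 := by rw [Finset.sum_comm]; exact hQ1
  -- T ρ ≥ 1 for ρ ≥ 0
  have hT1 : ∀ ρ : ℝ, 0 ≤ ρ → 1 ≤ ∑ v, (∑ u, Q u v) *
      ((∑ u, p v u ^ ((1:ℝ)/(1+ρ))) ^ (1+ρ)) := by
    intro ρ hρ
    have h1ρ : (1:ℝ) ≤ 1 + ρ := by linarith
    have hinner : ∀ v, 1 ≤ (∑ u, p v u ^ ((1:ℝ)/(1+ρ))) ^ (1+ρ) := by
      intro v
      have hs0 : ∑ u, p v u ≤ ∑ u, p v u ^ ((1:ℝ)/(1+ρ)) := by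
        apply Finset.sum_le_sum
        intro u _
        rcases eq_or_lt_of_le (hp0 v u) with h | h
        · rw [← h, Real.zero_rpow (by positivity : (1:ℝ)/(1+ρ) ≠ 0)]
        · calc p v u = p v u ^ (1:ℝ) := (Real.rpow_one _).symm
            _ ≤ p v u ^ ((1:ℝ)/(1+ρ)) := by
              apply Real.rpow_le_rpow_of_exponent_ge h (hple v u)
              rw [div_le_one (by linarith)]
              exact h1ρ
      have hs : 1 ≤ ∑ u, p v u ^ ((1:ℝ)/(1+ρ)) := (hp1 v) ▸ hs0
      calc (1:ℝ) = 1 ^ (1+ρ) := (Real.one_rpow _).symm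
        _ ≤ (∑ u, p v u ^ ((1:ℝ)/(1+ρ))) ^ (1+ρ) :=
          Real.rpow_le_rpow zero_le_one hs (by linarith)
    calc (1:ℝ) = ∑ v, (∑ u, Q u v) * 1 := by simp [hmsum]
      _ ≤ _ := Finset.sum_le_sum fun v _ =>
          mul_le_mul_of_nonneg_left (hinner v) (hm v).le
  -- monotonicity of T
  have hTmono : ∀ ρ₁ ρ₂ : ℝ, 0 ≤ ρ₁ → ρ₁ ≤ ρ₂ →
      (∑ v, (∑ u, Q u v) * ((∑ u, p v u ^ ((1:ℝ)/(1+ρ₁))) ^ (1+ρ₁))) ≤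
      (∑ v, (∑ u, Q u v) * ((∑ u, p v u ^ ((1:ℝ)/(1+ρ₂))) ^ (1+ρ₂))) := by
    intro ρ₁ ρ₂ h1 h12
    apply Finset.sum_le_sum
    intro v _
    apply mul_le_mul_of_nonneg_left _ (hm v).le
    exact norm_mono (p v) (hp0 v) (by linarith) (by linarith)
  have hzero : Esi 0 = 0 := by
    rw [hEsi 0]
    have he : (1:ℝ)/(1+(0:ℝ)) = 1 := by norm_num
    have this : ∀ v : V, (∑ u, p v u ^ ((1:ℝ)/(1+(0:ℝ)))) ^ (1+(0:ℝ)) = 1 := by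
      intro v
      rw [he, Finset.sum_congr rfl fun u _ => Real.rpow_one (p v u), hp1 v, Real.one_rpow]
    simp only [hp] at this
    rw [Finset.sum_congr rfl fun v _ => by rw [this v]]
    simp [hmsum]
  refine ⟨hzero, ?_, ?_⟩
  · intro ρ hρ
    rw [hEsi ρ]
    exact Real.logb_nonneg (by norm_num) (hT1 ρ hρ)
  · intro ρ₁ ρ₂ h1 h12
    rw [hEsi ρ₁, hEsi ρ₂]
    have hpos : 0 < ∑ v, (∑ u, Q u v) * ((∑ u, p v u ^ ((1:ℝ)/(1+ρ₁))) ^ (1+ρ₁)) :=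
      lt_of_lt_of_le one_pos (hT1 ρ₁ h1)
    exact Real.logb_le_logb_of_le (by norm_num : (1:ℝ) < 2) hpos (hTmono ρ₁ ρ₂ h1 h12)
end
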